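/- Let E : A → P be a conditional expectation of finite index which is approximately representable with projection e ∈ P_∞ (so e x e = E(x) e for x ∈ A), and let {(u_i, v_i)} be a quasi-basis for E. Then f := ∑_i u_i e e_P v_i ∈ B^∞ is a projection commuting with every element of the basic construction B = C*⟨A, e_P⟩ (i.e. f ∈ B_∞), satisfying f e_P = e_P f = e e_P. -/
import Mathlib


/-- A finite-index inclusion `P ⊆ A` of unital C*-algebras together with its
C*-basic construction, all realized inside one ambient C*-algebra `B = C*⟨A, e_P⟩`:
`E : A → P` is a conditional expectation of finite Watatani index `ind`
(a central, positive, invertible element, with inverse `indInv`), `eP` is the Jones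
projection (`e_P a e_P = E(a) e_P`, `B` is the linear span of `A e_P A`), and
`Ehat` is the (faithful) dual conditional expectation `Ê : B → A`,
`Ê(x e_P y) = (Index E)⁻¹ x y`. -/
structure WatataniSetup (B : Type*) [NormedRing B] [StarRing B] [CStarRing B]
    [NormedAlgebra ℂ B] [CompleteSpace B] [StarModule ℂ B] [PartialOrder B]
    [StarOrderedRing B] where
  A : StarSubalgebra ℂ B
  P : StarSubalgebra ℂ B
  le : P ≤ A
  E : B → B
  eP : B
  Ehat : B → B
  ind : B
  indInv : B
  ind_mem : ind ∈ P
  ind_central : ∀ b : B, Commute ind b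
  ind_pos : 0 ≤ ind
  ind_mul_inv : ind * indInv = 1
  inv_mul_ind : indInv * ind = 1
  -- `E` is a conditional expectation from `A` onto `P`
  E_add : ∀ x y : B, E (x + y) = E x + E y
  E_smul : ∀ (c : ℂ) (x : B), E (c • x) = c • E x
  E_mem : ∀ x ∈ A, E x ∈ P
  E_fix : ∀ x ∈ P, E x = x
  E_bimod : ∀ p ∈ P, ∀ q ∈ P, ∀ x : B, E (p * x * q) = p * E x * q
  E_star : ∀ x : B, E (star x) = star (E x)
  E_pos : ∀ x : B, 0 ≤ E (star x * x)
  E_faithful : ∀ x ∈ A, E (star x * x) = 0 → x = 0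
  -- the Jones projection
  eP_idem : eP * eP = eP
  eP_star : star eP = eP
  eP_conj : ∀ a ∈ A, eP * a * eP = E a * eP
  eP_comm : ∀ p ∈ P, Commute eP p
  eP_inj : ∀ p ∈ P, p * eP = 0 → p = 0
  -- `B` is the basic construction: the linear span of `A e_P A`
  span : ∀ z : B, ∃ (n : ℕ) (x y : Fin n → B),
    (∀ i, x i ∈ A) ∧ (∀ i, y i ∈ A) ∧ z = ∑ i, x i * eP * y i
  -- the dual conditional expectation `Ê : B → A`
  Ehat_add : ∀ x y : B, Ehat (x + y) = Ehat x + Ehat y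
  Ehat_smul : ∀ (c : ℂ) (x : B), Ehat (c • x) = c • Ehat x
  Ehat_mem : ∀ x : B, Ehat x ∈ A
  Ehat_fix : ∀ x ∈ A, Ehat x = x
  Ehat_bimod : ∀ p ∈ A, ∀ q ∈ A, ∀ x : B, Ehat (p * x * q) = p * Ehat x * q
  Ehat_star : ∀ x : B, Ehat (star x) = star (Ehat x)
  Ehat_pos : ∀ x : B, 0 ≤ Ehat (star x * x)
  Ehat_faithful : ∀ x : B, Ehat (star x * x) = 0 → x = 0
  Ehat_eP : ∀ x ∈ A, ∀ y ∈ A, Ehat (x * eP * y) = indInv * (x * y)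


/-- A sequence `(a n)` in a normed space is bounded. -/
def IsBddSeq {A : Type*} [Norm A] (a : ℕ → A) : Prop := ∃ C : ℝ, ∀ n, ‖a n‖ ≤ C

/-- Data exhibiting the algebra `Ainf` as the quotient `A^∞ = ℓ^∞(ℕ, A)/c₀(A)` of
bounded sequences in `A` modulo null sequences; `q` is the quotient map (its values
on unbounded sequences are irrelevant). -/
structure SeqAlg (A : Type*) [NormedRing A] [StarRing A] [NormedAlgebra ℂ A]
    (Ainf : Type*) [Ring Ainf] [StarRing Ainf] [Algebra ℂ Ainf] where
  q : (ℕ → A) → Ainf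
  surj : ∀ z : Ainf, ∃ a : ℕ → A, IsBddSeq a ∧ q a = z
  q_add : ∀ a b : ℕ → A, IsBddSeq a → IsBddSeq b → q (a + b) = q a + q b
  q_mul : ∀ a b : ℕ → A, IsBddSeq a → IsBddSeq b → q (a * b) = q a * q b
  q_smul : ∀ (c : ℂ) (a : ℕ → A), IsBddSeq a → q (c • a) = c • q a
  q_star : ∀ a : ℕ → A, IsBddSeq a → q (star a) = star (q a)
  q_one : q 1 = 1
  q_eq_zero_iff : ∀ a : ℕ → A, IsBddSeq a →
    (q a = 0 ↔ Filter.Tendsto (fun n => ‖a n‖) Filter.atTop (nhds 0))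

/-- The canonical embedding of `A` into `Ainf` as (classes of) constant sequences. -/
def SeqAlg.incl {A : Type*} [NormedRing A] [StarRing A] [NormedAlgebra ℂ A]
    {Ainf : Type*} [Ring Ainf] [StarRing Ainf] [Algebra ℂ Ainf]
    (S : SeqAlg A Ainf) (x : A) : Ainf := S.q fun _ => x

lemma const_bdd {A : Type*} [Norm A] (x : A) : IsBddSeq (fun _ : ℕ => x) :=
  ⟨‖x‖, fun _ => le_rfl⟩

namespace SeqAlg

variable {A : Type*} [NormedRing A] [StarRing A] [NormedAlgebra ℂ A]
  {Ainf : Type*} [Ring Ainf] [StarRing Ainf] [Algebra ℂ Ainf] (T : SeqAlg A Ainf)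

lemma incl_add (x y : A) : T.incl (x + y) = T.incl x + T.incl y :=
  T.q_add _ _ (const_bdd x) (const_bdd y)

lemma incl_mul (x y : A) : T.incl (x * y) = T.incl x * T.incl y :=
  T.q_mul _ _ (const_bdd x) (const_bdd y)

lemma incl_star (x : A) : star (T.incl x) = T.incl (star x) :=
  (T.q_star _ (const_bdd x)).symm

lemma incl_one : T.incl 1 = (1 : Ainf) := T.q_one

lemma incl_zero : T.incl 0 = (0 : Ainf) := by
  refine (T.q_eq_zero_iff _ (const_bdd 0)).mpr ?_
  simpa using (tendsto_const_nhds : Filter.Tendsto (fun _ : ℕ => (0:ℝ)) Filter.atTop (nhds 0))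

lemma incl_sum {ι : Type*} (s : Finset ι) (g : ι → A) :
    T.incl (∑ i ∈ s, g i) = ∑ i ∈ s, T.incl (g i) := by
  classical
  induction s using Finset.cons_induction with
  | empty => simpa using T.incl_zero
  | cons a s h ih => rw [Finset.sum_cons, Finset.sum_cons, T.incl_add, ih]

end SeqAlg

/-- let `E : A → P` be approximately representable with projection
`e ∈ P_∞` (so `e x e = E(x) e` for `x ∈ A`) and let `{(u i, v i)}` be a quasi-basis
for `E`. Then `f = ∑ i, u i * e * e_P * v i ∈ B^∞` is a projection commuting with
every element of the basic construction `B = C*⟨A, e_P⟩` (i.e. `f ∈ B_∞`), and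
`f e_P = e_P f = e e_P`. -/
theorem approx_rep_gives_rohlin_projection_for_dual
    {B : Type*} [NormedRing B] [StarRing B] [CStarRing B] [NormedAlgebra ℂ B]
    [CompleteSpace B] [StarModule ℂ B] [PartialOrder B] [StarOrderedRing B]
    (S : WatataniSetup B)
    {Binf : Type*} [Ring Binf] [StarRing Binf] [Algebra ℂ Binf] (T : SeqAlg B Binf)
    -- a quasi-basis `{(u i, v i)}` for `E : A → P`
    {n : ℕ} (u v : Fin n → B) (hu : ∀ i, u i ∈ S.A) (hv : ∀ i, v i ∈ S.A)
    (hqb : ∀ a ∈ S.A, (a = ∑ i, u i * S.E (v i * a)) ∧ (a = ∑ i, S.E (a * u i) * v i))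
    (hind : S.ind = ∑ i, u i * v i)
    -- the projection `e ∈ P_∞` approximately representing `E`
    (e : Binf) (he_rep : ∃ a : ℕ → B, IsBddSeq a ∧ (∀ n, a n ∈ S.P) ∧ T.q a = e)
    (he_idem : e * e = e) (he_star : star e = e)
    (he_comm : ∀ p ∈ S.P, Commute e (T.incl p))
    (he_repE : ∀ x ∈ S.A, e * T.incl x * e = T.incl (S.E x) * e)
    (he_inj : ∀ y ∈ S.P, T.incl y * e = 0 → y = 0) :
    letI f : Binf := ∑ i, T.incl (u i) * (e * T.incl S.eP) * T.incl (v i)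
    f * f = f ∧ star f = f ∧ (∀ z : B, Commute f (T.incl z)) ∧
      f * T.incl S.eP = e * T.incl S.eP ∧ T.incl S.eP * f = e * T.incl S.eP := by
  classical
  obtain ⟨aseq, ha_bdd, haP, hae⟩ := he_rep
  set ε : Binf := T.incl S.eP with hε
  set f : Binf := ∑ i, T.incl (u i) * (e * ε) * T.incl (v i) with hf
  -- `e` commutes with the Jones projection
  have h_eε : e * ε = ε * e := by
    rw [hε, ← hae]
    show T.q aseq * T.q (fun _ => S.eP) = T.q (fun _ => S.eP) * T.q aseq
    rw [← T.q_mul _ _ ha_bdd (const_bdd _), ← T.q_mul _ _ (const_bdd _) ha_bdd]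
    congr 1
    funext m
    exact ((S.eP_comm (aseq m) (haP m)).eq).symm
  -- commutation helpers with arbitrary tails
  have hεP : ∀ p ∈ S.P, ∀ t : Binf, ε * (T.incl p * t) = T.incl p * (ε * t) := by
    intro p hp t
    rw [← mul_assoc, ← mul_assoc]
    congr 1
    rw [hε, ← T.incl_mul, ← T.incl_mul, (S.eP_comm p hp).eq]
  have hPe : ∀ p ∈ S.P, ∀ t : Binf, e * (T.incl p * t) = T.incl p * (e * t) := by
    intro p hp t
    rw [← mul_assoc, (he_comm p hp).eq, mul_assoc]
  have heεT : ∀ t : Binf, e * (ε * t) = ε * (e * t) := by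
    intro t
    rw [← mul_assoc, h_eε, mul_assoc]
  have hconjT : ∀ x ∈ S.A, ε * (T.incl x * ε) = T.incl (S.E x) * ε := by
    intro x hx
    rw [hε, ← mul_assoc, ← T.incl_mul, ← T.incl_mul, S.eP_conj x hx, T.incl_mul]
  have hconjT' : ∀ x ∈ S.A, ∀ t : Binf,
      ε * (T.incl x * (ε * t)) = T.incl (S.E x) * (ε * t) := by
    intro x hx t
    calc ε * (T.incl x * (ε * t)) = (ε * (T.incl x * ε)) * t := by
          simp only [mul_assoc]
      _ = (T.incl (S.E x) * ε) * t := by rw [hconjT x hx]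
      _ = T.incl (S.E x) * (ε * t) := by rw [mul_assoc]
  -- quasi-basis sums
  have hsum1 : ∑ i, u i * S.E (v i) = 1 := by
    have h := (hqb 1 S.A.one_mem).1
    simp only [mul_one] at h
    exact h.symm
  have hsum2 : ∑ i, S.E (u i) * v i = 1 := by
    have h := (hqb 1 S.A.one_mem).2
    simp only [one_mul] at h
    exact h.symm
  -- generic term computation
  have hgen : ∀ w z : B, w ∈ S.A → z ∈ S.A →
      T.incl w * (e * ε) * T.incl z * ε = T.incl (w * S.E z) * (e * ε) := by
    intro w z hw hz
    have hp : S.E z ∈ S.P := S.E_mem _ hz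
    calc T.incl w * (e * ε) * T.incl z * ε
        = T.incl w * (e * (ε * (T.incl z * ε))) := by simp only [mul_assoc]
      _ = T.incl w * (e * (T.incl (S.E z) * ε)) := by rw [hconjT z hz]
      _ = T.incl w * (T.incl (S.E z) * (e * ε)) := by rw [hPe _ hp ε]
      _ = T.incl (w * S.E z) * (e * ε) := by rw [T.incl_mul, mul_assoc]
  -- f * eP = e * eP
  have hfeP : f * ε = e * ε := by
    rw [hf, Finset.sum_mul]
    have hterm : ∀ i ∈ Finset.univ, T.incl (u i) * (e * ε) * T.incl (v i) * ε
        = T.incl (u i * S.E (v i)) * (e * ε) := fun i _ => hgen _ _ (hu i) (hv i)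
    rw [Finset.sum_congr rfl hterm, ← Finset.sum_mul, ← T.incl_sum, hsum1,
      T.incl_one, one_mul]
  -- eP * f = e * eP
  have hePf : ε * f = e * ε := by
    rw [hf, Finset.mul_sum]
    have hterm : ∀ i ∈ Finset.univ, ε * (T.incl (u i) * (e * ε) * T.incl (v i))
        = e * (ε * T.incl (S.E (u i) * v i)) := by
      intro i _
      have hp : S.E (u i) ∈ S.P := S.E_mem _ (hu i)
      calc ε * (T.incl (u i) * (e * ε) * T.incl (v i))
          = ε * (T.incl (u i) * (e * (ε * T.incl (v i)))) := by simp only [mul_assoc]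
        _ = ε * (T.incl (u i) * (ε * (e * T.incl (v i)))) := by
            rw [heεT (T.incl (v i))]
        _ = T.incl (S.E (u i)) * (ε * (e * T.incl (v i))) := hconjT' (u i) (hu i) _
        _ = T.incl (S.E (u i)) * (e * (ε * T.incl (v i))) := by
            rw [← heεT (T.incl (v i))]
        _ = e * (T.incl (S.E (u i)) * (ε * T.incl (v i))) := (hPe _ hp _).symm
        _ = e * (ε * (T.incl (S.E (u i)) * T.incl (v i))) := by
            rw [hεP _ hp (T.incl (v i))]
        _ = e * (ε * T.incl (S.E (u i) * v i)) := by rw [T.incl_mul]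
    rw [Finset.sum_congr rfl hterm, ← Finset.mul_sum, ← Finset.mul_sum,
      ← T.incl_sum, hsum2, T.incl_one, mul_one]
  -- f commutes with (the image of) A
  have hA : ∀ x ∈ S.A, f * T.incl x = T.incl x * f := by
    intro x hx
    have expand : ∀ i : Fin n, T.incl (v i) * T.incl x
        = ∑ j, T.incl (S.E (v i * x * u j)) * T.incl (v j) := by
      intro i
      rw [← T.incl_mul]
      conv_lhs => rw [(hqb (v i * x) (S.A.mul_mem (hv i) hx)).2]
      rw [T.incl_sum]
      exact Finset.sum_congr rfl fun j _ => T.incl_mul _ _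
    calc f * T.incl x
        = ∑ i, T.incl (u i) * (e * ε) * T.incl (v i) * T.incl x := by
          rw [hf, Finset.sum_mul]
      _ = ∑ i, ∑ j, T.incl (u i * S.E (v i * x * u j)) * (e * (ε * T.incl (v j))) := by
          refine Finset.sum_congr rfl fun i _ => ?_
          rw [mul_assoc, expand i, Finset.mul_sum]
          refine Finset.sum_congr rfl fun j _ => ?_
          have hp : S.E (v i * x * u j) ∈ S.P :=
            S.E_mem _ (S.A.mul_mem (S.A.mul_mem (hv i) hx) (hu j))
          calc T.incl (u i) * (e * ε) * (T.incl (S.E (v i * x * u j)) * T.incl (v j))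
              = T.incl (u i) * (e * (ε * (T.incl (S.E (v i * x * u j)) * T.incl (v j)))) := by
                simp only [mul_assoc]
            _ = T.incl (u i) * (e * (T.incl (S.E (v i * x * u j)) * (ε * T.incl (v j)))) := by
                rw [hεP _ hp]
            _ = T.incl (u i) * (T.incl (S.E (v i * x * u j)) * (e * (ε * T.incl (v j)))) := by
                rw [hPe _ hp]
            _ = T.incl (u i * S.E (v i * x * u j)) * (e * (ε * T.incl (v j))) := by
                rw [T.incl_mul]
                simp only [mul_assoc]
      _ = ∑ j, ∑ i, T.incl (u i * S.E (v i * x * u j)) * (e * (ε * T.incl (v j))) :=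
          Finset.sum_comm
      _ = ∑ j, T.incl (x * u j) * (e * (ε * T.incl (v j))) := by
          refine Finset.sum_congr rfl fun j _ => ?_
          have hs : ∑ i, u i * S.E (v i * x * u j) = x * u j := by
            have h := (hqb (x * u j) (S.A.mul_mem hx (hu j))).1
            simp only [mul_assoc]
            exact h.symm
          rw [← Finset.sum_mul, ← T.incl_sum, hs]
      _ = T.incl x * f := by
          rw [hf, Finset.mul_sum]
          refine Finset.sum_congr rfl fun j _ => ?_
          rw [T.incl_mul]
          simp only [mul_assoc]
  -- star f as an explicit sum
  have hεstar : star ε = ε := by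
    rw [hε, T.incl_star, S.eP_star]
  have hstar_sum : star f = ∑ i, T.incl (star (v i)) * (e * ε) * T.incl (star (u i)) := by
    rw [hf, star_sum]
    refine Finset.sum_congr rfl fun i _ => ?_
    calc star (T.incl (u i) * (e * ε) * T.incl (v i))
        = star (T.incl (v i)) * (star ε * star e * star (T.incl (u i))) := by
          rw [star_mul, star_mul, star_mul]
      _ = T.incl (star (v i)) * (e * ε * T.incl (star (u i))) := by
          rw [hεstar, he_star, T.incl_star, T.incl_star, ← h_eε]
      _ = T.incl (star (v i)) * (e * ε) * T.incl (star (u i)) := (mul_assoc _ _ _).symm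
  have hsum3 : ∑ i, star (v i) * S.E (star (u i)) = 1 := by
    calc ∑ i, star (v i) * S.E (star (u i)) = ∑ i, star (S.E (u i) * v i) := by
          refine Finset.sum_congr rfl fun i _ => ?_
          rw [star_mul, S.E_star]
      _ = star (∑ i, S.E (u i) * v i) := (star_sum _ _).symm
      _ = 1 := by rw [hsum2, star_one]
  have hgeP : star f * ε = e * ε := by
    rw [hstar_sum, Finset.sum_mul]
    have hterm : ∀ i ∈ Finset.univ,
        T.incl (star (v i)) * (e * ε) * T.incl (star (u i)) * ε
        = T.incl (star (v i) * S.E (star (u i))) * (e * ε) :=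
      fun i _ => hgen _ _ (star_mem (hv i)) (star_mem (hu i))
    rw [Finset.sum_congr rfl hterm, ← Finset.sum_mul, ← T.incl_sum, hsum3,
      T.incl_one, one_mul]
  have hAg : ∀ x ∈ S.A, star f * T.incl x = T.incl x * star f := by
    intro x hx
    have h := congrArg star (hA (star x) (star_mem hx))
    rw [star_mul, star_mul, T.incl_star, star_star] at h
    exact h.symm
  -- star f = f
  have hstar : star f = f := by
    have hz : ∀ z : B, (f - star f) * T.incl z = 0 := by
      intro z
      obtain ⟨m, xs, ys, hxs, hys, hzz⟩ := S.span z
      rw [hzz, T.incl_sum, Finset.mul_sum]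
      refine Finset.sum_eq_zero fun k _ => ?_
      rw [T.incl_mul, T.incl_mul, ← hε]
      have h1 : f * (T.incl (xs k) * ε * T.incl (ys k))
          = T.incl (xs k) * (e * ε) * T.incl (ys k) := by
        calc f * (T.incl (xs k) * ε * T.incl (ys k))
            = (f * T.incl (xs k)) * (ε * T.incl (ys k)) := by simp only [mul_assoc]
          _ = (T.incl (xs k) * f) * (ε * T.incl (ys k)) := by rw [hA _ (hxs k)]
          _ = T.incl (xs k) * ((f * ε) * T.incl (ys k)) := by simp only [mul_assoc]
          _ = T.incl (xs k) * ((e * ε) * T.incl (ys k)) := by rw [hfeP]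
          _ = T.incl (xs k) * (e * ε) * T.incl (ys k) := (mul_assoc _ _ _).symm
      have h2 : star f * (T.incl (xs k) * ε * T.incl (ys k))
          = T.incl (xs k) * (e * ε) * T.incl (ys k) := by
        calc star f * (T.incl (xs k) * ε * T.incl (ys k))
            = (star f * T.incl (xs k)) * (ε * T.incl (ys k)) := by simp only [mul_assoc]
          _ = (T.incl (xs k) * star f) * (ε * T.incl (ys k)) := by rw [hAg _ (hxs k)]
          _ = T.incl (xs k) * ((star f * ε) * T.incl (ys k)) := by simp only [mul_assoc]
          _ = T.incl (xs k) * ((e * ε) * T.incl (ys k)) := by rw [hgeP]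
          _ = T.incl (xs k) * (e * ε) * T.incl (ys k) := (mul_assoc _ _ _).symm
      rw [sub_mul, h1, h2, sub_self]
    have h1 := hz 1
    rw [T.incl_one, mul_one] at h1
    exact (sub_eq_zero.mp h1).symm
  have hcommε : f * ε = ε * f := by rw [hfeP, hePf]
  -- f commutes with all of B
  have hcomm_all : ∀ z : B, Commute f (T.incl z) := by
    intro z
    obtain ⟨m, xs, ys, hxs, hys, hzz⟩ := S.span z
    show f * T.incl z = T.incl z * f
    rw [hzz, T.incl_sum, Finset.mul_sum, Finset.sum_mul]
    refine Finset.sum_congr rfl fun k _ => ?_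
    rw [T.incl_mul, T.incl_mul, ← hε]
    calc f * (T.incl (xs k) * ε * T.incl (ys k))
        = (f * T.incl (xs k)) * (ε * T.incl (ys k)) := by simp only [mul_assoc]
      _ = (T.incl (xs k) * f) * (ε * T.incl (ys k)) := by rw [hA _ (hxs k)]
      _ = T.incl (xs k) * ((f * ε) * T.incl (ys k)) := by simp only [mul_assoc]
      _ = T.incl (xs k) * ((ε * f) * T.incl (ys k)) := by rw [hcommε]
      _ = T.incl (xs k) * (ε * (T.incl (ys k) * f)) := by
          rw [mul_assoc ε f, hA _ (hys k)]
      _ = T.incl (xs k) * ε * T.incl (ys k) * f := by simp only [mul_assoc]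
  -- f is idempotent
  have heεf : e * ε * f = e * ε := by
    rw [mul_assoc, hePf, ← mul_assoc, he_idem]
  have hff : f * f = f := by
    calc f * f = ∑ i, T.incl (u i) * (e * ε) * T.incl (v i) * f := by
          nth_rewrite 1 [hf]
          rw [Finset.sum_mul]
      _ = ∑ i, T.incl (u i) * (e * ε) * T.incl (v i) := by
          refine Finset.sum_congr rfl fun i _ => ?_
          calc T.incl (u i) * (e * ε) * T.incl (v i) * f
              = T.incl (u i) * (e * ε) * (T.incl (v i) * f) := mul_assoc _ _ _
            _ = T.incl (u i) * (e * ε) * (f * T.incl (v i)) := by rw [← hA _ (hv i)]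
            _ = T.incl (u i) * ((e * ε) * f) * T.incl (v i) := by simp only [mul_assoc]
            _ = T.incl (u i) * (e * ε) * T.incl (v i) := by rw [heεf]
      _ = f := hf.symm
  exact ⟨hff, hstar, hcomm_all, hfeP, hePf⟩
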